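/- arXiv:2311.02221 — 5 statements merged into one kernel-verified Lean document; each statement's English description precedes it below -/
import Mathlib

section
/- Greedy factorization correctness: Let A ∈ {0,1}^{d₁×d₂} and let M^W ∈ {0,1}^{h×d₂} be any binary matrix such that every row of M^W equals some nonzero row of A, and every nonzero row of A appears as some row of M^W. Define M^V ∈ {0,1}^{d₁×h} by M^V_{i,r} = 1 iff the support of row r of M^W is contained in the support of row i of A. Then the integer product M^V M^W has the same sparsity pattern as A. -/
/-- Correctness of the greedy mask factorization algorithm: with `M^W` made of the
nonzero rows of `A` (each appearing at least once) and `M^V` given by support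
inclusion, the product `M^V M^W` has the same sparsity pattern as `A`. -/
theorem stmt_4 (d₁ d₂ h : ℕ) (A : Matrix (Fin d₁) (Fin d₂) ℕ)
    (MW : Matrix (Fin h) (Fin d₂) ℕ)
    (hA : ∀ i j, A i j = 0 ∨ A i j = 1)
    (hMW01 : ∀ k j, MW k j = 0 ∨ MW k j = 1)
    (hrows : ∀ k : Fin h, ∃ i : Fin d₁, (∃ j, A i j = 1) ∧ ∀ j, MW k j = A i j)
    (hcover : ∀ i : Fin d₁, (∃ j, A i j = 1) → ∃ k : Fin h, ∀ j, MW k j = A i j)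
    (MV : Matrix (Fin d₁) (Fin h) ℕ)
    (hMV : ∀ i r, MV i r = if ∀ j, MW r j = 1 → A i j = 1 then 1 else 0) :
    ∀ i j, (MV * MW) i j ≠ 0 ↔ A i j = 1 := by
  intro i j
  rw [Matrix.mul_apply]
  constructor
  · intro hne
    obtain ⟨r, hr⟩ := Finset.exists_ne_zero_of_sum_ne_zero hne
    have hMVr : MV i r ≠ 0 := fun h0 => hr.2 (by simp [h0])
    have hMWr : MW r j ≠ 0 := fun h0 => hr.2 (by simp [h0])
    have hsub : ∀ j, MW r j = 1 → A i j = 1 := by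
      by_contra hc
      simp [hMV, hc] at hMVr
    exact hsub j ((hMW01 r j).resolve_left hMWr)
  · intro hAij
    obtain ⟨k, hk⟩ := hcover i ⟨j, hAij⟩
    intro h0
    have := Finset.sum_eq_zero_iff.mp h0 k (Finset.mem_univ k)
    have hMVik : MV i k = 1 := by
      rw [hMV, if_pos]
      intro j' hj'
      rw [← hk j']; exact hj'
    rw [hMVik, one_mul, hk j, hAij] at this
    exact one_ne_zero this
end

section
/- MADE mask autoregressivity: let d ≥ 2, let m⁰ : Fin d → {1,...,d} be a bijection, and m¹ : Fin h → {1,...,d-1} be any function. Define M¹ ∈ {0,1}^{h×d} by M¹_{k,j} = 1 iff m¹(k) ≥ m⁰(j), and M² ∈ {0,1}^{d×h} by M²_{i,k} = 1 iff m⁰(i) > m¹(k). Then for all i, j, if m⁰(j) ≥ m⁰(i) then (M²M¹)_{ij} = 0; i.e., output i can only depend on inputs j with m⁰(j) < m⁰(i). -/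
/-- MADE mask autoregressivity: the product of the constructed masks is strictly
lower triangular w.r.t. the ordering induced by `m⁰`. -/
theorem stmt_6 (d h : ℕ) (hd : 2 ≤ d)
    (m0 : Fin d → ℕ) (hm0 : Set.BijOn m0 Set.univ (Set.Icc 1 d))
    (m1 : Fin h → ℕ) (hm1 : ∀ k, m1 k ∈ Set.Icc 1 (d - 1))
    (M1 : Matrix (Fin h) (Fin d) ℕ)
    (hM1 : ∀ k j, M1 k j = if m0 j ≤ m1 k then 1 else 0)
    (M2 : Matrix (Fin d) (Fin h) ℕ)
    (hM2 : ∀ i k, M2 i k = if m1 k < m0 i then 1 else 0) :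
    ∀ i j : Fin d, m0 i ≤ m0 j → (M2 * M1) i j = 0 := by
  intro i j hij
  rw [Matrix.mul_apply]
  apply Finset.sum_eq_zero
  intro k _
  rw [hM1, hM2]
  by_cases h1 : m1 k < m0 i
  · have : ¬ m0 j ≤ m1 k := by omega
    simp [h1, this]
  · simp [h1]
end

section
/- Failure mode of random MADE (Proposition 1): with d ≥ 3, m⁰ a bijection Fin d → {1,...,d}, suppose m¹ : Fin h → {1,...,d-1} is the constant function 1 (each entry equals 1). With masks M¹_{k,j} = 1_{m¹(k) ≥ m⁰(j)} and M²_{i,k} = 1_{m⁰(i) > m¹(k)}, the product M²M¹ has at most one nonzero column, namely column j* where m⁰(j*) = 1; hence every output i with m⁰(i) > 1 depends only on input j*, enforcing conditional independencies not implied by a fully autoregressive structure. -/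
/-- Failure mode of random MADE: if `m¹` is constant equal to `1`, the mask product
has at most one nonzero column, the one of the input `j*` with `m⁰ j* = 1`. -/
theorem stmt_7 (d h : ℕ) (hd : 3 ≤ d)
    (m0 : Fin d → ℕ) (hm0 : Set.BijOn m0 Set.univ (Set.Icc 1 d))
    (m1 : Fin h → ℕ) (hm1 : ∀ k, m1 k = 1)
    (M1 : Matrix (Fin h) (Fin d) ℕ)
    (hM1 : ∀ k j, M1 k j = if m0 j ≤ m1 k then 1 else 0)
    (M2 : Matrix (Fin d) (Fin h) ℕ)
    (hM2 : ∀ i k, M2 i k = if m1 k < m0 i then 1 else 0) :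
    ∀ j : Fin d, m0 j ≠ 1 → ∀ i : Fin d, (M2 * M1) i j = 0 := by
  intro j hj i
  have hmem : m0 j ∈ Set.Icc 1 d := hm0.mapsTo (Set.mem_univ j)
  have h1 : 1 < m0 j := lt_of_le_of_ne hmem.1 (Ne.symm hj)
  rw [Matrix.mul_apply]
  apply Finset.sum_eq_zero
  intro k _
  have : M1 k j = 0 := by
    rw [hM1, if_neg]
    rw [hm1]
    omega
  simp [this]
end

section
/- Structural independence propagates through composition: let f : ℝ^d → ℝ^h and g : ℝ^h → ℝ^m, and let B ∈ {0,1}^{h×d}, C ∈ {0,1}^{m×h} be matrices such that output k of f does not depend on input j whenever B_{kj} = 0, and output i of g does not depend on input k whenever C_{ik} = 0. Then output i of g ∘ f does not depend on input j whenever (CB)_{ij} = 0 (product over ℕ). -/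
lemma multi_indep {h m : ℕ} (g : (Fin h → ℝ) → Fin m → ℝ)
    (C : Matrix (Fin m) (Fin h) ℕ) (i : Fin m)
    (hg : ∀ (k : Fin h), C i k = 0 →
      ∀ y y' : Fin h → ℝ, (∀ l, l ≠ k → y l = y' l) → g y i = g y' i)
    (S : Finset (Fin h)) :
    ∀ y y' : Fin h → ℝ, (∀ k, y k ≠ y' k → k ∈ S ∧ C i k = 0) → g y i = g y' i := by
  induction S using Finset.induction_on with
  | empty =>
    intro y y' hd
    have : y = y' := funext fun k => by
      by_contra hne; exact absurd (hd k hne).1 (Finset.notMem_empty k)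
    rw [this]
  | @insert a S ha ih =>
    intro y y' hd
    set y'' := Function.update y a (y' a) with hy''
    have h1 : g y i = g y'' i := by
      rcases eq_or_ne (y a) (y' a) with heq | hne
      · have : y'' = y := by
          funext l
          by_cases hl : l = a
          · subst hl; simp [hy'', heq]
          · simp [hy'', hl]
        rw [this]
      · have hC : C i a = 0 := (hd a hne).2
        exact hg a hC y y'' fun l hl => by simp [hy'', hl]
    have h2 : g y'' i = g y' i := by
      apply ih
      intro k hk
      by_cases hka : k = a
      · subst hka; simp [hy''] at hk
      · have hyk : y k ≠ y' k := by simpa [hy'', Function.update_of_ne hka] using hk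
        have := hd k hyk
        exact ⟨(Finset.mem_insert.1 this.1).resolve_left hka, this.2⟩
    rw [h1, h2]

/-- Structural independence propagates through composition: if `f` respects mask
`B` and `g` respects mask `C`, then `g ∘ f` respects the product mask `C * B`. -/
theorem stmt_10 (d h m : ℕ) (f : (Fin d → ℝ) → Fin h → ℝ) (g : (Fin h → ℝ) → Fin m → ℝ)
    (B : Matrix (Fin h) (Fin d) ℕ) (C : Matrix (Fin m) (Fin h) ℕ)
    (hB01 : ∀ k j, B k j = 0 ∨ B k j = 1)
    (hC01 : ∀ i k, C i k = 0 ∨ C i k = 1)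
    (hf : ∀ (k : Fin h) (j : Fin d), B k j = 0 →
      ∀ x x' : Fin d → ℝ, (∀ l, l ≠ j → x l = x' l) → f x k = f x' k)
    (hg : ∀ (i : Fin m) (k : Fin h), C i k = 0 →
      ∀ y y' : Fin h → ℝ, (∀ l, l ≠ k → y l = y' l) → g y i = g y' i) :
    ∀ (i : Fin m) (j : Fin d), (C * B) i j = 0 →
      ∀ x x' : Fin d → ℝ, (∀ l, l ≠ j → x l = x' l) → g (f x) i = g (f x') i := by
  intro i j hCB x x' hx
  have hsum : ∀ k, C i k * B k j = 0 := by
    have := hCB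
    rw [Matrix.mul_apply] at this
    intro k
    exact (Finset.sum_eq_zero_iff.mp this) k (Finset.mem_univ k)
  apply multi_indep g C i (fun k => hg i k) Finset.univ
  intro k hk
  refine ⟨Finset.mem_univ k, ?_⟩
  rcases Nat.mul_eq_zero.mp (hsum k) with hc | hb
  · exact hc
  · exact absurd (hf k j hb x x' hx) hk
end

section
/- StrNN soundness for a two-layer network: let A ∈ {0,1}^{d×d}, and let M¹ ∈ {0,1}^{h×d}, M² ∈ {0,1}^{d×h} satisfy M²M¹ ~ A (same sparsity pattern over ℕ). For any weights W ∈ ℝ^{h×d}, V ∈ ℝ^{d×h}, biases b ∈ ℝ^h, c ∈ ℝ^d, and any activation σ : ℝ → ℝ applied coordinatewise, define F(x) = (V ⊙ M²)·σ((W ⊙ M¹)x + b) + c. Then whenever A_{ij} = 0, output F(x)_i does not depend on input x_j. -/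
/-- StrNN soundness for a two-layer network: if the mask product `M² M¹` shares
the sparsity pattern of `A`, then output `i` of the masked network does not
depend on input `j` whenever `A i j = 0`. -/
theorem stmt_11 (d h : ℕ) (A : Matrix (Fin d) (Fin d) ℕ)
    (M1 : Matrix (Fin h) (Fin d) ℕ) (M2 : Matrix (Fin d) (Fin h) ℕ)
    (hM1 : ∀ k j, M1 k j = 0 ∨ M1 k j = 1)
    (hM2 : ∀ i k, M2 i k = 0 ∨ M2 i k = 1)
    (hA01 : ∀ i j, A i j = 0 ∨ A i j = 1)
    (hsim : ∀ i j, (M2 * M1) i j = 0 ↔ A i j = 0)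
    (W : Matrix (Fin h) (Fin d) ℝ) (V : Matrix (Fin d) (Fin h) ℝ)
    (b : Fin h → ℝ) (c : Fin d → ℝ) (σ : ℝ → ℝ)
    (F : (Fin d → ℝ) → Fin d → ℝ)
    (hF : ∀ x, F x =
      (Matrix.hadamard V (M2.map (Nat.cast : ℕ → ℝ))).mulVec
        (fun k => σ (((Matrix.hadamard W (M1.map (Nat.cast : ℕ → ℝ))).mulVec x + b) k)) + c) :
    ∀ i j : Fin d, A i j = 0 →
      ∀ x x' : Fin d → ℝ, (∀ l, l ≠ j → x l = x' l) → F x i = F x' i := by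
  intro i j hA x x' hxx
  have hprod : (M2 * M1) i j = 0 := (hsim i j).mpr hA
  have hterm : ∀ k, M2 i k * M1 k j = 0 := by
    intro k
    rw [Matrix.mul_apply] at hprod
    have := Finset.sum_eq_zero_iff.mp hprod
    exact this k (Finset.mem_univ k)
  simp only [hF, Pi.add_apply, Matrix.mulVec, dotProduct, Matrix.hadamard_apply]
  congr 1
  apply Finset.sum_congr rfl
  intro k _
  rcases hM2 i k with h2 | h2
  · simp [h2]
  · have hM1kj : M1 k j = 0 := by
      have := hterm k
      rw [h2, one_mul] at this
      exact this
    have : (∑ l, W k l * (M1.map (Nat.cast : ℕ → ℝ)) k l * x l)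
         = (∑ l, W k l * (M1.map (Nat.cast : ℕ → ℝ)) k l * x' l) := by
      apply Finset.sum_congr rfl
      intro l _
      by_cases hl : l = j
      · subst hl; simp [Matrix.map_apply, hM1kj]
      · rw [hxx l hl]
    rw [this]
end
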